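/- arXiv:2309.06090 — 9 statements merged into one kernel-verified Lean document; each statement's English description precedes it below -/
import Mathlib

section
/- The function g(x) = tanh(2 - 2x) - 3·tanh(1 - x) + 3/2 is nonnegative for all real x ≥ 0. -/
theorem tanh_network_nonneg :
    ∀ x : ℝ, 0 ≤ x →
      0 ≤ Real.tanh (2 - 2 * x) - 3 * Real.tanh (1 - x) + 3 / 2 := by
  have tanh_eq : ∀ y : ℝ, Real.tanh y = (Real.exp (2*y) - 1) / (Real.exp (2*y) + 1) := by
    intro y
    rw [Real.tanh_eq_sinh_div_cosh, Real.sinh_eq, Real.cosh_eq]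
    have h2 : Real.exp (2*y) = Real.exp y * Real.exp y := by
      rw [← Real.exp_add]; ring_nf
    have hneg : Real.exp (-y) = 1 / Real.exp y := by
      rw [Real.exp_neg]; exact inv_eq_one_div _
    have hpos : 0 < Real.exp y := Real.exp_pos y
    rw [h2, hneg]
    field_simp
  intro x hx
  set u := Real.exp (2*(1-x)) with hu_def
  have hu : 0 < u := Real.exp_pos _
  have hu_le : u ≤ 7.4 := by
    have h1 : u ≤ Real.exp 2 := by
      apply Real.exp_le_exp.2; linarith
    have h2 : Real.exp 2 = Real.exp 1 * Real.exp 1 := by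
      rw [← Real.exp_add]; norm_num
    have h3 := Real.exp_one_lt_d9
    have h4 : (0:ℝ) < Real.exp 1 := Real.exp_pos 1
    nlinarith
  have e1 : Real.tanh (1 - x) = (u - 1)/(u + 1) := by
    rw [tanh_eq]
  have e2 : Real.tanh (2 - 2*x) = (u^2 - 1)/(u^2 + 1) := by
    rw [tanh_eq]
    have h4 : (2:ℝ)*(2-2*x) = 2*(1-x) + 2*(1-x) := by ring
    rw [h4, Real.exp_add, ← hu_def]
    ring_nf
  rw [e1, e2]
  have hd1 : (0:ℝ) < u^2 + 1 := by positivity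
  have hd2 : (0:ℝ) < u + 1 := by linarith
  have key : (u^2 - 1)/(u^2 + 1) - 3*((u - 1)/(u + 1)) + 3/2
      = (-u^3 + 11*u^2 - 5*u + 7) / (2*(u^2+1)*(u+1)) := by
    field_simp
    ring
  rw [key]
  apply div_nonneg
  · nlinarith [sq_nonneg (6*u - 25/6), mul_nonneg (sq_nonneg u) (by linarith : (0:ℝ) ≤ 7.4 - u)]
  · positivity
end

section
/- (Nagumo's theorem, one direction) Let f : ℝⁿ → ℝⁿ be Lipschitz continuous so that ẋ = f(x) admits unique solutions from each initial condition, and let Ω = {x : B(x) ≤ 0} be a closed set defined by a C¹ function B. If ⟨∇B(x), f(x)⟩ < 0 for every x with B(x) = 0, then Ω is positively invariant: every solution starting in Ω stays in Ω for all future times. -/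
/-- Nagumo's theorem (one direction): if `⟨∇B(x), f(x)⟩ < 0` on the zero level
set of the C¹ function `B`, then `Ω = {x : B x ≤ 0}` is positively invariant
for solutions of `ξ' = f(ξ)`. -/
theorem nagumo_positive_invariance {n : ℕ}
    (f : EuclideanSpace ℝ (Fin n) → EuclideanSpace ℝ (Fin n))
    (hlip : ∃ K : NNReal, LipschitzWith K f)
    (B : EuclideanSpace ℝ (Fin n) → ℝ)
    (hB : ContDiff ℝ 1 B)
    (hBdot : ∀ x, B x = 0 → (fderiv ℝ B x) (f x) < 0) :
    ∀ (ξ : ℝ → EuclideanSpace ℝ (Fin n)) (t₀ : ℝ),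
      (∀ t, HasDerivAt ξ (f (ξ t)) t) →
      ξ t₀ ∈ {x | B x ≤ 0} →
      ∀ t, t₀ ≤ t → ξ t ∈ {x | B x ≤ 0} := by
  intro ξ t₀ hξ h0 t₁ ht₁
  set g : ℝ → ℝ := fun t => B (ξ t) with hg_def
  have hg : ∀ t, HasDerivAt g ((fderiv ℝ B (ξ t)) (f (ξ t))) t := fun t =>
    ((hB.differentiable one_ne_zero (ξ t)).hasFDerivAt).comp_hasDerivAt t (hξ t)
  have hgc : Continuous g := hB.continuous.comp (continuous_iff_continuousAt.mpr fun t => (hξ t).continuousAt)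
  by_contra hcon
  simp only [Set.mem_setOf_eq, not_le] at hcon
  -- S : times in [t₀, t₁] where g ≤ 0
  set S : Set ℝ := Set.Icc t₀ t₁ ∩ {t | g t ≤ 0} with hS_def
  have hS_closed : IsClosed S := isClosed_Icc.inter (isClosed_le hgc continuous_const)
  have hS_ne : S.Nonempty := ⟨t₀, ⟨le_rfl, ht₁⟩, h0⟩
  have hS_bdd : BddAbove S := ⟨t₁, fun x hx => hx.1.2⟩
  set s := sSup S with hs_def
  have hsS : s ∈ S := hS_closed.csSup_mem hS_ne hS_bdd
  have hs_lt : s < t₁ := lt_of_le_of_ne hsS.1.2 (fun h => absurd (h ▸ hsS.2) (not_le.mpr hcon))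
  have hpos : ∀ u ∈ Set.Ioc s t₁, 0 < g u := by
    intro u hu
    by_contra h
    push_neg at h
    have : u ≤ s := le_csSup hS_bdd ⟨⟨le_trans hsS.1.1 hu.1.le, hu.2⟩, h⟩
    exact absurd hu.1 (not_lt.mpr this)
  -- g s = 0
  have hgs0 : g s = 0 := by
    refine le_antisymm hsS.2 ?_
    have hlim : Filter.Tendsto g (nhdsWithin s (Set.Ioi s)) (nhds (g s)) :=
      (hgc.continuousAt).continuousWithinAt
    refine ge_of_tendsto hlim ?_
    filter_upwards [Ioc_mem_nhdsGT_of_mem ⟨le_rfl, hs_lt⟩] with u hu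
    exact (hpos u hu).le
  -- derivative at s is negative
  have hd : (fderiv ℝ B (ξ s)) (f (ξ s)) < 0 := hBdot _ hgs0
  have hslope : Filter.Tendsto (slope g s) (nhdsWithin s {s}ᶜ) (nhds _) :=
    hasDerivAt_iff_tendsto_slope.mp (hg s)
  have hslope' : Filter.Tendsto (slope g s) (nhdsWithin s (Set.Ioi s)) (nhds _) :=
    hslope.mono_left (nhdsWithin_mono s (fun x hx => ne_of_gt hx))
  have hev : ∀ᶠ u in nhdsWithin s (Set.Ioi s), slope g s u < 0 :=
    hslope'.eventually (eventually_lt_nhds hd)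
  have hev2 : ∀ᶠ u in nhdsWithin s (Set.Ioi s), u ∈ Set.Ioc s t₁ :=
    Ioc_mem_nhdsGT_of_mem ⟨le_rfl, hs_lt⟩
  obtain ⟨u, hu1, hu2⟩ := (hev.and hev2).exists
  have := hu1
  rw [slope_def_field] at this
  have hgu : g u < 0 := by
    have hne : u - s > 0 := sub_pos.mpr hu2.1
    have h3 := mul_neg_of_neg_of_pos this hne
    rw [div_mul_cancel₀ _ (ne_of_gt hne)] at h3
    linarith
  exact absurd (hpos u hu2) (not_lt.mpr hgu.le)
end

section
/- (Barrier certificate implies safety) Let B : X → ℝ be C¹ with B(x) ≤ 0 for all x in the compact initial set X_I, B(x) > 0 for all x in the unsafe set X_U, and ⟨∇B(x), f(x)⟩ < 0 for all x with B(x) = 0. Then every solution of ẋ = f(x) started in X_I avoids X_U for all times t ≥ t₀. -/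
/-- If `g` has negative derivative at `s`, then eventually to the right `g u < g s`. -/
lemma eventually_lt_of_hasDerivAt_neg {g : ℝ → ℝ} {s c : ℝ} (h : HasDerivAt g c s)
    (hc : c < 0) : ∀ᶠ u in nhdsWithin s (Set.Ioi s), g u < g s := by
  have hslope : Filter.Tendsto (slope g s) (nhdsWithin s {s}ᶜ) (nhds c) :=
    hasDerivAt_iff_tendsto_slope.mp h
  have h1 : ∀ᶠ u in nhdsWithin s {s}ᶜ, slope g s u < 0 :=
    hslope (Iio_mem_nhds hc)
  have h2 : ∀ᶠ u in nhdsWithin s (Set.Ioi s), slope g s u < 0 :=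
    nhdsWithin_mono s (fun u hu => ne_of_gt hu) h1
  filter_upwards [h2, self_mem_nhdsWithin] with u hu (hu' : s < u)
  have : (u - s)⁻¹ * (g u - g s) < 0 := hu
  have hp : 0 < (u - s)⁻¹ := inv_pos.mpr (sub_pos.mpr hu')
  nlinarith

/-- Barrier certificate implies safety (Theorem 2): if `B ≤ 0` on the initial
set, `B > 0` on the unsafe set, and `⟨∇B(x), f(x)⟩ < 0` whenever `B x = 0`,
then every trajectory started in `X_I` never enters `X_U`. -/
theorem barrier_certificate_safety {n : ℕ}
    (f : EuclideanSpace ℝ (Fin n) → EuclideanSpace ℝ (Fin n))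
    (X XI XU : Set (EuclideanSpace ℝ (Fin n)))
    (hX : IsCompact X)
    (hXI : IsCompact XI) (hXIX : XI ⊆ X) (hXUX : XU ⊆ X)
    (hlip : ∃ K : NNReal, LipschitzWith K f)
    (B : EuclideanSpace ℝ (Fin n) → ℝ)
    (hB : ContDiff ℝ 1 B)
    (hBI : ∀ x ∈ XI, B x ≤ 0)
    (hBU : ∀ x ∈ XU, 0 < B x)
    (hBdot : ∀ x, B x = 0 → (fderiv ℝ B x) (f x) < 0) :
    ∀ (ξ : ℝ → EuclideanSpace ℝ (Fin n)) (t₀ : ℝ),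
      (∀ t, HasDerivAt ξ (f (ξ t)) t) → ξ t₀ ∈ XI →
      ∀ t, t₀ ≤ t → ξ t ∉ XU := by
  intro ξ t₀ hξ hinit t ht hmem
  set g : ℝ → ℝ := fun u => B (ξ u) with hg
  have hgderiv : ∀ u, HasDerivAt g ((fderiv ℝ B (ξ u)) (f (ξ u))) u := fun u =>
    ((hB.differentiable one_ne_zero (ξ u)).hasFDerivAt).comp_hasDerivAt u (hξ u)
  have hgcont : Continuous g :=
    hB.continuous.comp (continuous_iff_continuousAt.mpr fun u => (hξ u).continuousAt)
  have hgt : 0 < g t := hBU _ hmem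
  have hg0 : g t₀ ≤ 0 := hBI _ hinit
  have ht₀t : t₀ < t := lt_of_le_of_ne ht (by rintro rfl; linarith)
  set S : Set ℝ := Set.Icc t₀ t ∩ {u | g u ≤ 0} with hS
  have hSne : S.Nonempty := ⟨t₀, ⟨le_rfl, ht⟩, hg0⟩
  have hSbdd : BddAbove S := ⟨t, fun u hu => hu.1.2⟩
  have hSclosed : IsClosed S := isClosed_Icc.inter (isClosed_le hgcont continuous_const)
  set s := sSup S with hs
  have hsS : s ∈ S := hSclosed.csSup_mem hSne hSbdd
  have hgs : g s ≤ 0 := hsS.2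
  have hst : s < t := hsS.1.2.lt_of_ne (fun h => absurd (h ▸ hgs) (not_le.mpr hgt))
  have key : ∃ u, s < u ∧ u ≤ t ∧ g u ≤ 0 := by
    rcases lt_or_eq_of_le hgs with hlt | heq
    · -- g s < 0 : continuity gives g < 0 just to the right
      have hev : ∀ᶠ u in nhdsWithin s (Set.Ioi s), g u < 0 :=
        ((hgcont.continuousAt.eventually_lt continuousAt_const hlt)).filter_mono
          nhdsWithin_le_nhds
      have hmem' : Set.Ioo s t ∈ nhdsWithin s (Set.Ioi s) := Ioo_mem_nhdsGT_of_mem ⟨le_rfl, hst⟩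
      obtain ⟨u, hu1, hu2⟩ := (hev.and (Filter.eventually_iff_exists_mem.mpr
        ⟨_, hmem', fun y hy => hy⟩)).exists
      exact ⟨u, hu2.1, hu2.2.le, hu1.le⟩
    · -- g s = 0 : negative derivative
      have hderiv := hgderiv s
      have hneg : (fderiv ℝ B (ξ s)) (f (ξ s)) < 0 := hBdot _ heq
      have hev := eventually_lt_of_hasDerivAt_neg hderiv hneg
      have hmem' : Set.Ioo s t ∈ nhdsWithin s (Set.Ioi s) := Ioo_mem_nhdsGT_of_mem ⟨le_rfl, hst⟩
      obtain ⟨u, hu1, hu2⟩ := (hev.and (Filter.eventually_iff_exists_mem.mpr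
        ⟨_, hmem', fun y hy => hy⟩)).exists
      exact ⟨u, hu2.1, hu2.2.le, by rw [heq] at hu1; exact hu1.le⟩
  obtain ⟨u, hsu, hut, hgu⟩ := key
  have : u ≤ s := le_csSup hSbdd ⟨⟨le_trans hsS.1.1 hsu.le, hut⟩, hgu⟩
  linarith
end

section
/- Under a barrier certificate B for system ẋ = f(x) with initial set X_I and unsafe set X_U, the zero-sublevel set Ω₀ = {x ∈ X : B(x) ≤ 0} is a forward invariant set that contains X_I and is disjoint from X_U. -/
/-! Along a solution `ξ`, the function `t ↦ B (ξ t)` has derivative `⟨∇B (ξ t), f (ξ t)⟩`, which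
is negative whenever `B (ξ t) = 0`; by the fencing theorem for right derivatives it can therefore
never cross from `≤ 0` to `> 0`. -/

theorem le_zero_along_solution_of_fderiv_neg_on_zero {E : Type*} [NormedAddCommGroup E]
    [NormedSpace ℝ E] {f : E → E} {B : E → ℝ} (hB : Differentiable ℝ B)
    (hBdot : ∀ x, B x = 0 → fderiv ℝ B x (f x) < 0) {ξ : ℝ → E}
    (hξ : ∀ t, HasDerivAt ξ (f (ξ t)) t) {t₀ t : ℝ} (h₀ : B (ξ t₀) ≤ 0) (ht : t₀ ≤ t) :
    B (ξ t) ≤ 0 := by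
  have hBξ : ∀ s, HasDerivAt (B ∘ ξ) (fderiv ℝ B (ξ s) (f (ξ s))) s := fun s =>
    (hB (ξ s)).hasFDerivAt.comp_hasDerivAt s (hξ s)
  exact image_le_of_deriv_right_lt_deriv_boundary (B := 0) (B' := 0)
    (continuous_iff_continuousAt.mpr fun s => (hBξ s).continuousAt).continuousOn
    (fun s _ => (hBξ s).hasDerivWithinAt) h₀ (fun _ => hasDerivAt_const _ _)
    (fun s _ hs => hBdot (ξ s) hs) ⟨ht, le_rfl⟩

theorem barrier_sublevel_invariant_general {n : ℕ}
    (f : EuclideanSpace ℝ (Fin n) → EuclideanSpace ℝ (Fin n))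
    (X XI XU : Set (EuclideanSpace ℝ (Fin n)))
    (hXIX : XI ⊆ X)
    (B : EuclideanSpace ℝ (Fin n) → ℝ)
    (hB : ContDiff ℝ 1 B)
    (hBI : ∀ x ∈ XI, B x ≤ 0)
    (hBU : ∀ x ∈ XU, 0 < B x)
    (hBdot : ∀ x, B x = 0 → (fderiv ℝ B x) (f x) < 0) :
    XI ⊆ {x ∈ X | B x ≤ 0} ∧
    Disjoint {x ∈ X | B x ≤ 0} XU ∧
    ∀ (ξ : ℝ → EuclideanSpace ℝ (Fin n)) (t₀ : ℝ),
      (∀ t, HasDerivAt ξ (f (ξ t)) t) →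
      (∀ t, ξ t ∈ X) →
      ξ t₀ ∈ {x ∈ X | B x ≤ 0} →
      ∀ t, t₀ ≤ t → ξ t ∈ {x ∈ X | B x ≤ 0} := by
  refine ⟨fun x hx => ⟨hXIX hx, hBI x hx⟩, ?_, ?_⟩
  · exact Set.disjoint_left.mpr fun x hx hxU => (hBU x hxU).not_ge hx.2
  · intro ξ t₀ hξ hξX h₀ t ht
    exact ⟨hξX t, le_zero_along_solution_of_fderiv_neg_on_zero (hB.differentiable one_ne_zero)
      hBdot hξ h₀.2 ht⟩

/-- Under a barrier certificate `B`, the zero-sublevel set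
`Ω₀ = {x ∈ X : B x ≤ 0}` contains `X_I`, is disjoint from `X_U`, and is
forward invariant for solutions of `ξ' = f(ξ)`. -/
theorem barrier_sublevel_invariant {n : ℕ}
    (f : EuclideanSpace ℝ (Fin n) → EuclideanSpace ℝ (Fin n))
    (X XI XU : Set (EuclideanSpace ℝ (Fin n)))
    (hXIX : XI ⊆ X) (hXUX : XU ⊆ X)
    (hlip : ∃ K : NNReal, LipschitzWith K f)
    (B : EuclideanSpace ℝ (Fin n) → ℝ)
    (hB : ContDiff ℝ 1 B)
    (hBI : ∀ x ∈ XI, B x ≤ 0)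
    (hBU : ∀ x ∈ XU, 0 < B x)
    (hBdot : ∀ x, B x = 0 → (fderiv ℝ B x) (f x) < 0) :
    XI ⊆ {x ∈ X | B x ≤ 0} ∧
    Disjoint {x ∈ X | B x ≤ 0} XU ∧
    ∀ (ξ : ℝ → EuclideanSpace ℝ (Fin n)) (t₀ : ℝ),
      (∀ t, HasDerivAt ξ (f (ξ t)) t) →
      (∀ t, ξ t ∈ X) →
      ξ t₀ ∈ {x ∈ X | B x ≤ 0} →
      ∀ t, t₀ ≤ t → ξ t ∈ {x ∈ X | B x ≤ 0} :=
  barrier_sublevel_invariant_general f X XI XU hXIX B hB hBI hBU hBdot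
end

section
/- (Reach-While-Avoid certificate) Let X_S ⊂ X be a compact safe set, X_I ⊂ interior(X_S) a compact initial set, and X_G ⊂ interior(X_S) a compact goal set with nonempty interior. Suppose V : ℝⁿ → ℝ is C¹ and there exists γ > 0 such that: V(x) ≤ 0 for all x ∈ X_I; V(x) > 0 for all x ∈ ∂X_S; and V̇(x) ≤ −γ for all x ∈ {x ∈ X_S : V(x) ≤ 0} \ X_G. Then every trajectory of ẋ = f(x) started in X_I remains in the complement of X_U = X \ X_S until some finite time T at which it is in X_G. -/
/-- Reach-While-Avoid certificate (Theorem 3): `V ≤ 0` on `X_I`, `V > 0` on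
`∂X_S`, and `V̇ ≤ -γ` on `{x ∈ X_S : V x ≤ 0} \ X_G` imply that every
trajectory started in `X_I` stays out of `X_U = X \ X_S` until some finite
time `T` at which it lies in the goal set `X_G`. -/
theorem rwa_certificate {n : ℕ}
    (f : EuclideanSpace ℝ (Fin n) → EuclideanSpace ℝ (Fin n))
    (X XS XI XG : Set (EuclideanSpace ℝ (Fin n)))
    (hXS : IsCompact XS) (hXSX : XS ⊆ X)
    (hXI : IsCompact XI) (hXIint : XI ⊆ interior XS)
    (hXG : IsCompact XG) (hXGint : XG ⊆ interior XS)
    (hXGne : (interior XG).Nonempty)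
    (hlip : ∃ K : NNReal, LipschitzWith K f)
    (V : EuclideanSpace ℝ (Fin n) → ℝ)
    (hV : ContDiff ℝ 1 V)
    (γ : ℝ) (hγ : 0 < γ)
    (hVI : ∀ x ∈ XI, V x ≤ 0)
    (hVbd : ∀ x ∈ frontier XS, 0 < V x)
    (hVdot : ∀ x ∈ {x ∈ XS | V x ≤ 0} \ XG, (fderiv ℝ V x) (f x) ≤ -γ) :
    ∀ (ξ : ℝ → EuclideanSpace ℝ (Fin n)) (t₀ : ℝ),
      (∀ t, HasDerivAt ξ (f (ξ t)) t) → ξ t₀ ∈ XI →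
      ∃ T, t₀ ≤ T ∧ (∀ t ∈ Set.Icc t₀ T, ξ t ∉ X \ XS) ∧ ξ T ∈ XG := by
  intro ξ t₀ hξ hξ0
  obtain ⟨K, hK⟩ := hlip
  have hVc : Continuous V := hV.continuous
  have hVd : Differentiable ℝ V := hV.differentiable one_ne_zero
  have hξc : Continuous ξ := by
    rw [continuous_iff_continuousAt]; exact fun t => (hξ t).continuousAt
  set g : ℝ → ℝ := fun t => V (ξ t) with hgdef
  have hg : ∀ t, HasDerivAt g ((fderiv ℝ V (ξ t)) (f (ξ t))) t := fun t =>
    (hVd (ξ t)).hasFDerivAt.comp_hasDerivAt t (hξ t)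
  have hgc : Continuous g := hVc.comp hξc
  have hD : Continuous fun x => (fderiv ℝ V x) (f x) :=
    (hV.continuous_fderiv one_ne_zero).clm_apply hK.continuous
  have hξ0S : ξ t₀ ∈ XS := interior_subset (hXIint hξ0)
  have hg0 : g t₀ ≤ 0 := hVI _ hξ0
  have hXScl : IsClosed XS := hXS.isClosed
  -- interior membership from XS ∧ V ≤ 0
  have hint : ∀ x, x ∈ XS → V x ≤ 0 → x ∈ interior XS := by
    intro x hx hVx
    by_contra h
    have : x ∈ frontier XS := by
      rw [hXScl.frontier_eq]; exact ⟨hx, h⟩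
    exact absurd (hVbd x this) (not_lt.mpr hVx)
  -- Key invariance lemma
  have key : ∀ T', t₀ ≤ T' → (∀ s, t₀ ≤ s → s < T' → ξ s ∉ XG) →
      ∀ t ∈ Set.Icc t₀ T', ξ t ∈ XS ∧ g t ≤ g t₀ - γ/2 * (t - t₀) := by
    intro T' hT' havoid
    set A : Set ℝ := {t ∈ Set.Icc t₀ T' |
      ∀ s ∈ Set.Icc t₀ t, ξ s ∈ XS ∧ g s ≤ g t₀ - γ/2 * (s - t₀)} with hAdef
    have ht₀A : t₀ ∈ A := by
      refine ⟨⟨le_refl _, hT'⟩, ?_⟩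
      intro s hs
      have : s = t₀ := le_antisymm hs.2 hs.1
      subst this
      exact ⟨hξ0S, by simp⟩
    have hAne : A.Nonempty := ⟨t₀, ht₀A⟩
    have hAbdd : BddAbove A := ⟨T', fun t ht => ht.1.2⟩
    have hdown : ∀ a ∈ A, ∀ s, t₀ ≤ s → s ≤ a → s ∈ A := by
      intro a ha s hs1 hs2
      exact ⟨⟨hs1, hs2.trans ha.1.2⟩, fun u hu => ha.2 u ⟨hu.1, hu.2.trans hs2⟩⟩
    set c := sSup A with hcdef
    have hc1 : t₀ ≤ c := le_csSup hAbdd ht₀A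
    have hc2 : c ≤ T' := csSup_le hAne fun t ht => ht.1.2
    have hIco : ∀ s ∈ Set.Ico t₀ c, s ∈ A := by
      intro s hs
      obtain ⟨a, haA, hsa⟩ := exists_lt_of_lt_csSup hAne hs.2
      exact hdown a haA s hs.1 hsa.le
    have hP : ∀ s ∈ Set.Ico t₀ c, ξ s ∈ XS ∧ g s ≤ g t₀ - γ/2 * (s - t₀) := by
      intro s hs
      exact (hIco s hs).2 s ⟨hs.1, le_refl _⟩
    -- c ∈ A
    have hcA : c ∈ A := by
      rcases eq_or_lt_of_le hc1 with h | h
      · rw [← h]; exact ht₀A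
      · refine ⟨⟨hc1, hc2⟩, ?_⟩
        intro s hs
        rcases lt_or_eq_of_le hs.2 with hsc | hsc
        · exact hP s ⟨hs.1, hsc⟩
        · rw [hsc]
          have hne : (nhdsWithin c (Set.Iio c)).NeBot := inferInstance
          have hev : ∀ᶠ u in nhdsWithin c (Set.Iio c), u ∈ Set.Ico t₀ c := by
            filter_upwards [Ioo_mem_nhdsLT_of_mem (Set.mem_Ioc.mpr ⟨h, le_refl _⟩)] with u hu
            exact ⟨hu.1.le, hu.2⟩
          have htend : Filter.Tendsto ξ (nhdsWithin c (Set.Iio c)) (nhds (ξ c)) :=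
            (hξc.tendsto c).mono_left nhdsWithin_le_nhds
          constructor
          · refine hXScl.mem_of_tendsto htend ?_
            filter_upwards [hev] with u hu using (hP u hu).1
          · have h1 : Filter.Tendsto g (nhdsWithin c (Set.Iio c)) (nhds (g c)) :=
              (hgc.tendsto c).mono_left nhdsWithin_le_nhds
            have h2 : Filter.Tendsto (fun u => g t₀ - γ/2 * (u - t₀))
                (nhdsWithin c (Set.Iio c)) (nhds (g t₀ - γ/2 * (c - t₀))) := by
              exact ((continuous_const.sub
                (continuous_const.mul (continuous_id.sub continuous_const))).tendsto c).mono_left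
                nhdsWithin_le_nhds
            refine le_of_tendsto_of_tendsto h1 h2 ?_
            filter_upwards [hev] with u hu using (hP u hu).2
    -- show c = T'
    rcases eq_or_lt_of_le hc2 with hceq | hclt
    · intro t ht
      exact hcA.2 t (by rw [hceq]; exact ht)
    · exfalso
      have hcS : ξ c ∈ XS := (hcA.2 c ⟨hc1, le_refl _⟩).1
      have hcg : g c ≤ g t₀ - γ/2 * (c - t₀) := (hcA.2 c ⟨hc1, le_refl _⟩).2
      have hcg0 : g c ≤ 0 := by nlinarith
      have hcG : ξ c ∉ XG := havoid c hc1 hclt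
      have hcd : (fderiv ℝ V (ξ c)) (f (ξ c)) ≤ -γ := hVdot _ ⟨⟨hcS, hcg0⟩, hcG⟩
      have hcint : ξ c ∈ interior XS := hint _ hcS hcg0
      -- open set around c where derivative < -γ/2 and state in interior XS, and time < T'
      set U : Set (EuclideanSpace ℝ (Fin n)) :=
        {x | (fderiv ℝ V x) (f x) < -(γ/2)} ∩ interior XS with hUdef
      have hUopen : IsOpen U := (isOpen_lt hD continuous_const).inter isOpen_interior
      have hcU : ξ c ∈ U := ⟨by simp only [Set.mem_setOf_eq]; linarith, hcint⟩
      have hWopen : IsOpen (ξ ⁻¹' U ∩ Set.Iio T') := (hUopen.preimage hξc).inter isOpen_Iio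
      have hcW : c ∈ ξ ⁻¹' U ∩ Set.Iio T' := ⟨hcU, hclt⟩
      obtain ⟨ε, hε, hball⟩ := Metric.isOpen_iff.mp hWopen c hcW
      set t₁ := c + ε/2 with ht₁def
      have hct₁ : c < t₁ := by simp [ht₁def]; linarith
      have hIccW : Set.Icc c t₁ ⊆ ξ ⁻¹' U ∩ Set.Iio T' := by
        intro u hu
        obtain ⟨hu1, hu2⟩ := hu
        apply hball
        rw [Metric.mem_ball, Real.dist_eq, abs_lt]
        have h2' : u ≤ c + ε/2 := ht₁def ▸ hu2
        constructor <;> linarith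
      have ht₁T' : t₁ ≤ T' := le_of_lt (hIccW ⟨hct₁.le, le_refl _⟩).2
      -- g decreases with rate γ/2 on [c, t₁]
      have hanti : ∀ u ∈ Set.Icc c t₁, g u + γ/2 * u ≤ g c + γ/2 * c := by
        have h1 : AntitoneOn (fun u => g u + γ/2 * u) (Set.Icc c t₁) := by
          apply antitoneOn_of_deriv_nonpos (convex_Icc c t₁)
          · exact (hgc.add (continuous_const.mul continuous_id)).continuousOn
          · intro u _
            exact ((hg u).add ((hasDerivAt_id u).const_mul (γ/2))).differentiableAt.differentiableWithinAt
          · intro u hu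
            rw [interior_Icc] at hu
            have hd : HasDerivAt (fun u => g u + γ/2 * u)
                ((fderiv ℝ V (ξ u)) (f (ξ u)) + γ/2 * 1) u :=
              (hg u).add ((hasDerivAt_id u).const_mul (γ/2))
            rw [hd.deriv]
            have := (hIccW ⟨hu.1.le, hu.2.le⟩).1.1
            simp only [Set.mem_setOf_eq] at this
            linarith
        intro u hu
        exact h1 ⟨le_refl _, hct₁.le⟩ hu hu.1
      have ht₁A : t₁ ∈ A := by
        refine ⟨⟨hc1.trans hct₁.le, ht₁T'⟩, ?_⟩
        intro s hs
        rcases le_or_gt s c with hsc | hsc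
        · exact hcA.2 s ⟨hs.1, hsc⟩
        · have hsIcc : s ∈ Set.Icc c t₁ := ⟨hsc.le, hs.2⟩
          constructor
          · exact interior_subset (hIccW hsIcc).1.2
          · have := hanti s hsIcc
            nlinarith
      have : t₁ ≤ c := le_csSup hAbdd ht₁A
      linarith
  -- lower bound on V over XS
  obtain ⟨xm, hxmS, hxmmin⟩ := hXS.exists_isMinOn ⟨ξ t₀, hξ0S⟩ hVc.continuousOn
  set M := V xm with hMdef
  have hM : ∀ x ∈ XS, M ≤ V x := fun x hx => hxmmin hx
  -- time horizon
  set T₁ := t₀ + (|g t₀| + |M| + 1) * (2/γ) with hT₁def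
  have hT₁ : t₀ ≤ T₁ := le_add_of_nonneg_right (by positivity)
  have hdecT₁ : g t₀ - γ/2 * (T₁ - t₀) < M := by
    have h1 : γ/2 * ((|g t₀| + |M| + 1) * (2/γ)) = |g t₀| + |M| + 1 := by
      field_simp
    have h2 : g t₀ ≤ |g t₀| := le_abs_self _
    have h3 : -|M| ≤ M := neg_abs_le _
    simp only [hT₁def, add_sub_cancel_left]
    rw [h1]
    linarith
  -- the hitting set
  set S : Set ℝ := {t ∈ Set.Icc t₀ T₁ | ξ t ∈ XG} with hSdef
  have hSne : S.Nonempty := by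
    by_contra h
    rw [Set.not_nonempty_iff_eq_empty] at h
    have havoid : ∀ s, t₀ ≤ s → s < T₁ → ξ s ∉ XG := by
      intro s hs1 hs2 hsG
      have : s ∈ S := ⟨⟨hs1, hs2.le⟩, hsG⟩
      rw [h] at this; exact this
    obtain ⟨hT₁S, hT₁g⟩ := key T₁ hT₁ havoid T₁ ⟨hT₁, le_refl _⟩
    have := hM _ hT₁S
    have : M ≤ g T₁ := this
    linarith
  have hScl : IsClosed S := by
    have : S = Set.Icc t₀ T₁ ∩ ξ ⁻¹' XG := rfl
    rw [this]
    exact isClosed_Icc.inter (hXG.isClosed.preimage hξc)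
  have hSbdd : BddBelow S := ⟨t₀, fun t ht => ht.1.1⟩
  set T := sInf S with hTdef
  have hTS : T ∈ S := hScl.csInf_mem hSne hSbdd
  have hT0 : t₀ ≤ T := hTS.1.1
  have havoid : ∀ s, t₀ ≤ s → s < T → ξ s ∉ XG := by
    intro s hs1 hs2 hsG
    have : s ∈ S := ⟨⟨hs1, hs2.le.trans hTS.1.2⟩, hsG⟩
    exact absurd (csInf_le hSbdd this) (not_le.mpr hs2)
  refine ⟨T, hT0, ?_, hTS.2⟩
  intro t ht hmem
  exact hmem.2 (key T hT0 havoid t ht).1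
end

section
/- (Reach-and-Stay-While-Avoid certificate) Let X_S be a compact safe set, X_I ⊂ interior(X_S) compact, X_F ⊂ interior(X_S) compact. Suppose V : ℝⁿ → ℝ is C¹ and there exist γ > 0 and β < 0 with: V ≤ 0 on X_I; V > 0 on ∂X_S; V̇ ≤ −γ on {x ∈ X_S : V(x) ≤ 0} \ X_F; V > β on ∂X_F; and V̇ ≤ −γ on X_F \ interior({x ∈ X_S : V(x) ≤ β}). Then every trajectory started in X_I avoids X_U = X \ X_S, reaches in finite time the set X_F ∩ {V ≤ β}, and remains in X_F for all subsequent times. -/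
/-!
While the trajectory sits in `X_S` with `V ≤ 0`, it cannot leave: the boundary of `X_S` is
excluded because `V > 0` there, and at points where the sublevel set `{V ≤ 0}` could be left
`V` strictly decreases. The same barrier argument, with `∂X_F` and the level `β`, keeps
`X_F ∩ {V ≤ β}` forward invariant. Outside this target set `V` decreases at rate at least `γ`
along the trajectory, and it is bounded below on the compact set `X_S`, so the target is
reached in finite time.
-/

open Set Filter Topology

theorem IsClosed.Ici_subset_of_forall_mem_nhdsGT {α : Type*}
    [ConditionallyCompleteLinearOrder α] [DenselyOrdered α] [TopologicalSpace α] [OrderTopology α]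
    {s : Set α} {a : α} (hs : IsClosed s) (ha : a ∈ s)
    (hgt : ∀ x ∈ s ∩ Ici a, s ∈ 𝓝[>] x) : Ici a ⊆ s :=
  fun _ hb ↦ (hs.inter isClosed_Icc).Icc_subset_of_forall_mem_nhdsWithin ha
    (fun x hx ↦ hgt x ⟨hx.1, hx.2.1⟩) ⟨hb, le_rfl⟩

theorem HasDerivAt.eventually_nhdsGT_lt_of_neg {g : ℝ → ℝ} {c τ : ℝ} (hg : HasDerivAt g c τ)
    (hc : c < 0) : ∀ᶠ t in 𝓝[>] τ, g t < g τ := by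
  filter_upwards [hg.hasDerivWithinAt.limsup_slope_le' (lt_irrefl τ) hc, self_mem_nhdsWithin]
    with t hslope ht
  rw [slope_def_field, div_neg_iff] at hslope
  rcases hslope with ⟨-, hneg⟩ | ⟨hdrop, -⟩
  · linarith [mem_Ioi.1 ht]
  · linarith

theorem exists_ge_of_bddBelow_of_deriv_le_neg {g d : ℝ → ℝ} {P : ℝ → Prop} {t₀ m γ : ℝ}
    (hg : ∀ t, HasDerivAt g (d t) t) (hγ : 0 < γ) (hm : ∀ t ≥ t₀, m ≤ g t)
    (hd : ∀ t ≥ t₀, ¬ P t → d t ≤ -γ) : ∃ t ≥ t₀, P t := by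
  by_contra! hP
  set t₁ := t₀ + (g t₀ - m + 1) / γ
  have ht₁ : t₀ ≤ t₁ := le_add_of_nonneg_right (div_nonneg (by linarith [hm t₀ le_rfl]) hγ.le)
  have hgc : Continuous g := continuous_iff_continuousAt.2 fun t ↦ (hg t).continuousAt
  have hdrop : g t₁ - g t₀ ≤ -γ * (t₁ - t₀) := by
    refine (convex_Ici t₀).image_sub_le_mul_sub_of_deriv_le hgc.continuousOn
      (fun t _ ↦ (hg t).differentiableAt.differentiableWithinAt) (fun t ht ↦ ?_)
      t₀ self_mem_Ici t₁ ht₁ ht₁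
    rw [interior_Ici] at ht
    rw [(hg t).deriv]
    exact hd t ht.le (hP t ht.le)
  have hlength : γ * (t₁ - t₀) = g t₀ - m + 1 := by
    simp only [t₁]
    field_simp
    ring
  linarith [hm t₁ ht₁]

section Barrier

variable {E : Type*} [NormedAddCommGroup E] [NormedSpace ℝ E] {f : E → E} {V : E → ℝ}
  {ξ : ℝ → E}

theorem forall_ge_mem_sublevel_of_barrier (hV : Differentiable ℝ V)
    (hξ : ∀ t, HasDerivAt ξ (f (ξ t)) t) {S : Set E} (hS : IsClosed S) {c : ℝ}
    (hfr : ∀ x ∈ frontier S, c < V x)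
    (hexit : ∀ x ∈ S, V x ≤ c → x ∉ interior {x | V x ≤ c} → fderiv ℝ V x (f x) < 0)
    {t₀ : ℝ} (hS₀ : ξ t₀ ∈ S) (hc₀ : V (ξ t₀) ≤ c) :
    ∀ t ≥ t₀, ξ t ∈ S ∧ V (ξ t) ≤ c := by
  have hξc : Continuous ξ := continuous_iff_continuousAt.2 fun t ↦ (hξ t).continuousAt
  have hK : IsClosed {t | ξ t ∈ S ∧ V (ξ t) ≤ c} :=
    (hS.preimage hξc).inter (isClosed_le (hV.continuous.comp hξc) continuous_const)
  intro t ht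
  refine hK.Ici_subset_of_forall_mem_nhdsGT ⟨hS₀, hc₀⟩ (fun τ ⟨⟨hSτ, hcτ⟩, _⟩ ↦ ?_) ht
  have hint : ξ τ ∈ interior S := by
    by_contra hnot
    exact (hfr _ (hS.frontier_eq ▸ ⟨hSτ, hnot⟩)).not_ge hcτ
  have hstayS : ∀ᶠ s in 𝓝[>] τ, ξ s ∈ S :=
    (hξc.continuousAt.eventually_mem (mem_interior_iff_mem_nhds.1 hint)).filter_mono
      nhdsWithin_le_nhds
  have hstayc : ∀ᶠ s in 𝓝[>] τ, V (ξ s) ≤ c := by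
    by_cases hi : ξ τ ∈ interior {x | V x ≤ c}
    · exact (hξc.continuousAt.eventually_mem (mem_interior_iff_mem_nhds.1 hi)).filter_mono
        nhdsWithin_le_nhds
    · have hVξ := (hV (ξ τ)).hasFDerivAt.comp_hasDerivAt τ (hξ τ)
      exact (hVξ.eventually_nhdsGT_lt_of_neg (hexit _ hSτ hcτ hi)).mono
        fun s hs ↦ hs.le.trans hcτ
  exact hstayS.and hstayc

end Barrier

theorem rswa_certificate_general {n : ℕ}
    (f : EuclideanSpace ℝ (Fin n) → EuclideanSpace ℝ (Fin n))
    (X XS XI XF : Set (EuclideanSpace ℝ (Fin n)))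
    (hXS : IsCompact XS)
    (hXIint : XI ⊆ interior XS)
    (hXF : IsCompact XF)
    (V : EuclideanSpace ℝ (Fin n) → ℝ)
    (hV : ContDiff ℝ 1 V)
    (γ β : ℝ) (hγ : 0 < γ) (hβ : β < 0)
    (hVI : ∀ x ∈ XI, V x ≤ 0)
    (hVbd : ∀ x ∈ frontier XS, 0 < V x)
    (hVdot1 : ∀ x ∈ {x ∈ XS | V x ≤ 0} \ XF, (fderiv ℝ V x) (f x) ≤ -γ)
    (hVbdF : ∀ x ∈ frontier XF, β < V x)
    (hVdot2 : ∀ x ∈ XF \ interior {x ∈ XS | V x ≤ β},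
      (fderiv ℝ V x) (f x) ≤ -γ) :
    ∀ (ξ : ℝ → EuclideanSpace ℝ (Fin n)) (t₀ : ℝ),
      (∀ t, HasDerivAt ξ (f (ξ t)) t) → ξ t₀ ∈ XI →
      ∃ T, t₀ ≤ T ∧
        (∀ t ∈ Set.Icc t₀ T, ξ t ∉ X \ XS) ∧
        ξ T ∈ XF ∩ {x ∈ XS | V x ≤ β} ∧
        ∀ t, T ≤ t → ξ t ∈ XF := by
  intro ξ t₀ hξ hξ₀
  have hVd : Differentiable ℝ V := hV.differentiable one_ne_zero
  have hdecay : ∀ x ∈ XS, V x ≤ 0 → (x ∈ XF → x ∉ interior {x ∈ XS | V x ≤ β}) →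
      fderiv ℝ V x (f x) ≤ -γ := fun x hxS hx0 hxβ ↦ by
    by_cases hxF : x ∈ XF
    · exact hVdot2 x ⟨hxF, hxβ hxF⟩
    · exact hVdot1 x ⟨⟨hxS, hx0⟩, hxF⟩
  have hsafe := forall_ge_mem_sublevel_of_barrier hVd hξ hXS.isClosed hVbd
    (fun x hxS hx0 hx ↦ (hdecay x hxS hx0 fun _ hxβ ↦ hx <|
      interior_mono (fun y hy ↦ hy.2.trans hβ.le) hxβ).trans_lt (neg_neg_of_pos hγ))
    (interior_subset (hXIint hξ₀)) (hVI _ hξ₀)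
  have hVξ : ∀ t, HasDerivAt (fun s ↦ V (ξ s)) (fderiv ℝ V (ξ t) (f (ξ t))) t :=
    fun t ↦ (hVd (ξ t)).hasFDerivAt.comp_hasDerivAt t (hξ t)
  obtain ⟨m, hm⟩ := hXS.bddBelow_image hV.continuous.continuousOn
  obtain ⟨T, hT, hTF, hTβ⟩ : ∃ T ≥ t₀, ξ T ∈ XF ∧ V (ξ T) ≤ β :=
    exists_ge_of_bddBelow_of_deriv_le_neg hVξ hγ
      (fun t ht ↦ hm ⟨ξ t, (hsafe t ht).1, rfl⟩) fun t ht hreach ↦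
        hdecay _ (hsafe t ht).1 (hsafe t ht).2 fun hF hint ↦
          hreach ⟨hF, (interior_subset hint).2⟩
  have hstay := forall_ge_mem_sublevel_of_barrier hVd hξ hXF.isClosed hVbdF
    (fun x hxF _ hx ↦ (hVdot2 x ⟨hxF, fun hxβ ↦ hx <|
      interior_mono (fun y hy ↦ hy.2) hxβ⟩).trans_lt (neg_neg_of_pos hγ)) hTF hTβ
  exact ⟨T, hT, fun t ht hU ↦ hU.2 (hsafe t ht.1).1, ⟨hTF, (hsafe T hT).1, hTβ⟩,
    fun t ht ↦ (hstay t ht).1⟩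

/-- Reach-and-Stay-While-Avoid certificate (Theorem 4): under the RSWA
conditions, every trajectory started in `X_I` avoids `X_U = X \ X_S`, reaches
the set `X_F ∩ {V ≤ β}` in finite time, and remains in `X_F` afterwards. -/
theorem rswa_certificate {n : ℕ}
    (f : EuclideanSpace ℝ (Fin n) → EuclideanSpace ℝ (Fin n))
    (X XS XI XF : Set (EuclideanSpace ℝ (Fin n)))
    (hXS : IsCompact XS) (hXSX : XS ⊆ X)
    (hXI : IsCompact XI) (hXIint : XI ⊆ interior XS)
    (hXF : IsCompact XF) (hXFint : XF ⊆ interior XS)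
    (hlip : ∃ K : NNReal, LipschitzWith K f)
    (V : EuclideanSpace ℝ (Fin n) → ℝ)
    (hV : ContDiff ℝ 1 V)
    (γ β : ℝ) (hγ : 0 < γ) (hβ : β < 0)
    (hVI : ∀ x ∈ XI, V x ≤ 0)
    (hVbd : ∀ x ∈ frontier XS, 0 < V x)
    (hVdot1 : ∀ x ∈ {x ∈ XS | V x ≤ 0} \ XF, (fderiv ℝ V x) (f x) ≤ -γ)
    (hVbdF : ∀ x ∈ frontier XF, β < V x)
    (hVdot2 : ∀ x ∈ XF \ interior {x ∈ XS | V x ≤ β},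
      (fderiv ℝ V x) (f x) ≤ -γ) :
    ∀ (ξ : ℝ → EuclideanSpace ℝ (Fin n)) (t₀ : ℝ),
      (∀ t, HasDerivAt ξ (f (ξ t)) t) → ξ t₀ ∈ XI →
      ∃ T, t₀ ≤ T ∧
        (∀ t ∈ Set.Icc t₀ T, ξ t ∉ X \ XS) ∧
        ξ T ∈ XF ∩ {x ∈ XS | V x ≤ β} ∧
        ∀ t, T ≤ t → ξ t ∈ XF :=
  rswa_certificate_general f X XS XI XF hXS hXIint hXF V hV γ β hγ hβ hVI hVbd hVdot1 hVbdF hVdot2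
end

section
/- Under the RSWA certificate conditions, the set M = X_F ∩ {x ∈ X_S : V(x) ≤ β} is compact and forward invariant: any trajectory in M remains in M for all future time. -/
/-!
Since `V > β` on the frontier of `X_F`, every point of `M` lies in the interior of `X_F`, and
since `X_F ⊆ X_S`, `M = X_F ∩ {V ≤ β}`, a closed subset of the compact set `X_F`. For forward
invariance it suffices, `M` being closed, that a trajectory through a point of `M` stays in `M`
for a short time to the right. Near such a point the trajectory stays in `X_F`; if the point is
interior to the sublevel set it also stays there, and otherwise `V` strictly decreases along the
trajectory because `V̇ ≤ -γ < 0`.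
-/

open Set Filter Topology

theorem IsClosed.mapsTo_Ici_of_eventually_mem {X : Type*} [TopologicalSpace X] {S : Set X}
    (hS : IsClosed S) {ξ : ℝ → X} (hξ : Continuous ξ)
    (hloc : ∀ τ, ξ τ ∈ S → ∀ᶠ s in 𝓝[>] τ, ξ s ∈ S) {t₀ : ℝ} (h₀ : ξ t₀ ∈ S) :
    MapsTo ξ (Ici t₀) S := fun _ ht =>
  IsClosed.Icc_subset_of_forall_mem_nhdsWithin ((hS.preimage hξ).inter isClosed_Icc) h₀
    (fun τ hτ => hloc τ hτ.1) ⟨ht, le_rfl⟩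

theorem HasDerivAt.eventually_nhdsGT_lt {g : ℝ → ℝ} {g' τ : ℝ} (hg : HasDerivAt g g' τ)
    (hneg : g' < 0) : ∀ᶠ s in 𝓝[>] τ, g s < g τ := by
  filter_upwards [hg.hasDerivWithinAt.limsup_slope_le' (lt_irrefl τ) hneg, self_mem_nhdsWithin]
    with s hslope hs
  exact (slope_neg_iff_of_le (le_of_lt hs)).1 hslope

theorem mem_interior_of_forall_frontier_lt {X : Type*} [TopologicalSpace X] {F : Set X}
    {V : X → ℝ} {β : ℝ} (hfr : ∀ x ∈ frontier F, β < V x) {x : X} (hxF : x ∈ F)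
    (hxV : V x ≤ β) : x ∈ interior F := by
  by_contra hx
  exact (hfr x ⟨subset_closure hxF, hx⟩).not_ge hxV

section SublevelBarrier

variable {E : Type*} [NormedAddCommGroup E] [NormedSpace ℝ E]
  {f : E → E} {V : E → ℝ} {F : Set E} {β : ℝ} {ξ : ℝ → E}

theorem eventually_nhdsGT_mem_inter_sublevel (hV : Differentiable ℝ V)
    (hfr : ∀ x ∈ frontier F, β < V x)
    (hdec : ∀ x ∈ F \ interior (V ⁻¹' Iic β), fderiv ℝ V x (f x) < 0)
    (hξ : ∀ t, HasDerivAt ξ (f (ξ t)) t) {τ : ℝ} (hτ : ξ τ ∈ F ∩ V ⁻¹' Iic β) :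
    ∀ᶠ s in 𝓝[>] τ, ξ s ∈ F ∩ V ⁻¹' Iic β := by
  have near : ∀ {U : Set E}, IsOpen U → ξ τ ∈ U → ∀ᶠ s in 𝓝[>] τ, ξ s ∈ U := fun hU hτU =>
    nhdsWithin_le_nhds ((hξ τ).continuousAt.eventually (hU.mem_nhds hτU))
  have hF : ∀ᶠ s in 𝓝[>] τ, ξ s ∈ interior F :=
    near isOpen_interior (mem_interior_of_forall_frontier_lt hfr hτ.1 hτ.2)
  by_cases hβ : ξ τ ∈ interior (V ⁻¹' Iic β)
  · filter_upwards [hF, near isOpen_interior hβ] with s hsF hsV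
    exact ⟨interior_subset hsF, interior_subset hsV⟩
  · have hVξ : HasDerivAt (V ∘ ξ) (fderiv ℝ V (ξ τ) (f (ξ τ))) τ :=
      (hV _).hasFDerivAt.comp_hasDerivAt τ (hξ τ)
    filter_upwards [hF, hVξ.eventually_nhdsGT_lt (hdec _ ⟨hτ.1, hβ⟩)] with s hsF hsV
    exact ⟨interior_subset hsF, hsV.le.trans hτ.2⟩

theorem mapsTo_Ici_inter_sublevel (hF : IsClosed F) (hV : Differentiable ℝ V)
    (hfr : ∀ x ∈ frontier F, β < V x)
    (hdec : ∀ x ∈ F \ interior (V ⁻¹' Iic β), fderiv ℝ V x (f x) < 0)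
    (hξ : ∀ t, HasDerivAt ξ (f (ξ t)) t) {t₀ : ℝ} (h₀ : ξ t₀ ∈ F ∩ V ⁻¹' Iic β) :
    MapsTo ξ (Ici t₀) (F ∩ V ⁻¹' Iic β) :=
  (hF.inter (isClosed_Iic.preimage hV.continuous)).mapsTo_Ici_of_eventually_mem
    (continuous_iff_continuousAt.2 fun t => (hξ t).continuousAt)
    (fun _ hτ => eventually_nhdsGT_mem_inter_sublevel hV hfr hdec hξ hτ) h₀

end SublevelBarrier

theorem rswa_invariant_set_general {n : ℕ}
    (f : EuclideanSpace ℝ (Fin n) → EuclideanSpace ℝ (Fin n))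
    (XS XF : Set (EuclideanSpace ℝ (Fin n)))
    (hXF : IsCompact XF)
    (hXFint : XF ⊆ interior XS)
    (V : EuclideanSpace ℝ (Fin n) → ℝ)
    (hV : ContDiff ℝ 1 V)
    (γ β : ℝ) (hγ : 0 < γ)
    (hVbdF : ∀ x ∈ frontier XF, β < V x)
    (hVdot : ∀ x ∈ XF \ interior {x ∈ XS | V x ≤ β},
      (fderiv ℝ V x) (f x) ≤ -γ) :
    IsCompact (XF ∩ {x ∈ XS | V x ≤ β}) ∧
    ∀ (ξ : ℝ → EuclideanSpace ℝ (Fin n)) (t₀ : ℝ),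
      (∀ t, HasDerivAt ξ (f (ξ t)) t) →
      ξ t₀ ∈ XF ∩ {x ∈ XS | V x ≤ β} →
      ∀ t, t₀ ≤ t → ξ t ∈ XF ∩ {x ∈ XS | V x ≤ β} := by
  have hM : XF ∩ {x ∈ XS | V x ≤ β} = XF ∩ V ⁻¹' Iic β :=
    ext fun x => ⟨fun h => ⟨h.1, h.2.2⟩, fun h => ⟨h.1, interior_subset (hXFint h.1), h.2⟩⟩
  have hVd : Differentiable ℝ V := hV.differentiable one_ne_zero
  have hdec : ∀ x ∈ XF \ interior (V ⁻¹' Iic β), fderiv ℝ V x (f x) < 0 := fun x hx =>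
    (hVdot x ⟨hx.1, fun h => hx.2 (interior_mono (fun _ hy => hy.2) h)⟩).trans_lt
      (neg_neg_of_pos hγ)
  rw [hM]
  exact ⟨hXF.inter_right (isClosed_Iic.preimage hVd.continuous),
    fun ξ t₀ hξ h₀ _ ht => mapsTo_Ici_inter_sublevel hXF.isClosed hVd hVbdF hdec hξ h₀ ht⟩

/-- Under the RSWA certificate conditions, the set
`M = X_F ∩ {x ∈ X_S : V x ≤ β}` is compact and forward invariant. -/
theorem rswa_invariant_set {n : ℕ}
    (f : EuclideanSpace ℝ (Fin n) → EuclideanSpace ℝ (Fin n))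
    (XS XF : Set (EuclideanSpace ℝ (Fin n)))
    (hXS : IsCompact XS) (hXF : IsCompact XF)
    (hXFint : XF ⊆ interior XS)
    (hlip : ∃ K : NNReal, LipschitzWith K f)
    (V : EuclideanSpace ℝ (Fin n) → ℝ)
    (hV : ContDiff ℝ 1 V)
    (γ β : ℝ) (hγ : 0 < γ) (hβ : β < 0)
    (hVbdF : ∀ x ∈ frontier XF, β < V x)
    (hVdot : ∀ x ∈ XF \ interior {x ∈ XS | V x ≤ β},
      (fderiv ℝ V x) (f x) ≤ -γ) :
    IsCompact (XF ∩ {x ∈ XS | V x ≤ β}) ∧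
    ∀ (ξ : ℝ → EuclideanSpace ℝ (Fin n)) (t₀ : ℝ),
      (∀ t, HasDerivAt ξ (f (ξ t)) t) →
      ξ t₀ ∈ XF ∩ {x ∈ XS | V x ≤ β} →
      ∀ t, t₀ ≤ t → ξ t ∈ XF ∩ {x ∈ XS | V x ≤ β} :=
  rswa_invariant_set_general f XS XF hXF hXFint V hV γ β hγ hVbdF hVdot
end

section
/- (Reach-Avoid-Remain certificate) Let X_S be a compact safe set, X_I ⊂ interior(X_S), X_F ⊂ interior(X_S), and X_G ⊂ interior(X_F) with nonempty interior, all compact. Suppose V is a Reach-While-Avoid certificate for (X_I, X_S, X_G) and B ∈ C¹ satisfies B ≤ 0 on X_G, B > 0 on ∂X_F, and ⟨∇B(x), f(x)⟩ < 0 whenever B(x) = 0. Then every trajectory started in X_I avoids X \ X_S, reaches X_G at some finite time T, and remains within X_F for all t ≥ T. -/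
open Filter Topology Set

/-- If a real function has a negative derivative at `t`, it is eventually
smaller than its value at `t` to the right of `t`. -/
lemma ev_lt_of_hasDerivAt_neg {h : ℝ → ℝ} {t d : ℝ}
    (hd : HasDerivAt h d t) (hneg : d < 0) :
    ∀ᶠ s in 𝓝[>] t, h s < h t := by
  have h1 : ∀ᶠ s in 𝓝[≠] t, slope h t s < 0 :=
    (hasDerivAt_iff_tendsto_slope.mp hd).eventually (Iio_mem_nhds hneg)
  have hsub : Set.Ioi t ⊆ {t}ᶜ := fun s hs => ne_of_gt hs
  have h2 : ∀ᶠ s in 𝓝[>] t, slope h t s < 0 :=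
    h1.filter_mono (nhdsWithin_mono t hsub)
  filter_upwards [h2, self_mem_nhdsWithin] with s hs hst
  rw [slope_def_field] at hs
  have hts : (0:ℝ) < s - t := sub_pos.mpr hst
  by_contra hcon
  push_neg at hcon
  have : 0 ≤ (h s - h t) / (s - t) := div_nonneg (by linarith) hts.le
  exact absurd hs (not_lt.mpr this)

/-- Reach-Avoid-Remain certificate (Theorem 5): a Reach-While-Avoid
certificate `V` for `(X_I, X_S, X_G)` together with a barrier-type function
`B` (with `B ≤ 0` on `X_G`, `B > 0` on `∂X_F`, and `⟨∇B, f⟩ < 0` on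
`{B = 0}`) guarantees that every trajectory from `X_I` avoids `X \ X_S`,
reaches `X_G` at a finite time `T`, and stays in `X_F` for all `t ≥ T`. -/
theorem rar_certificate {n : ℕ}
    (f : EuclideanSpace ℝ (Fin n) → EuclideanSpace ℝ (Fin n))
    (X XS XI XF XG : Set (EuclideanSpace ℝ (Fin n)))
    (hXS : IsCompact XS) (hXSX : XS ⊆ X)
    (hXI : IsCompact XI) (hXIint : XI ⊆ interior XS)
    (hXF : IsCompact XF) (hXFint : XF ⊆ interior XS)
    (hXG : IsCompact XG) (hXGint : XG ⊆ interior XF)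
    (hXGne : (interior XG).Nonempty)
    (hlip : ∃ K : NNReal, LipschitzWith K f)
    (V B : EuclideanSpace ℝ (Fin n) → ℝ)
    (hV : ContDiff ℝ 1 V) (hB : ContDiff ℝ 1 B)
    (γ : ℝ) (hγ : 0 < γ)
    (hVI : ∀ x ∈ XI, V x ≤ 0)
    (hVbd : ∀ x ∈ frontier XS, 0 < V x)
    (hVdot : ∀ x ∈ {x ∈ XS | V x ≤ 0} \ XG, (fderiv ℝ V x) (f x) ≤ -γ)
    (hBG : ∀ x ∈ XG, B x ≤ 0)
    (hBF : ∀ x ∈ frontier XF, 0 < B x)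
    (hBdot : ∀ x, B x = 0 → (fderiv ℝ B x) (f x) < 0) :
    ∀ (ξ : ℝ → EuclideanSpace ℝ (Fin n)) (t₀ : ℝ),
      (∀ t, HasDerivAt ξ (f (ξ t)) t) → ξ t₀ ∈ XI →
      ∃ T, t₀ ≤ T ∧
        (∀ t ∈ Set.Icc t₀ T, ξ t ∉ X \ XS) ∧
        ξ T ∈ XG ∧
        ∀ t, T ≤ t → ξ t ∈ XF := by
  intro ξ t₀ hξ hξ0
  have ξcont : Continuous ξ := continuous_iff_continuousAt.mpr fun t => (hξ t).continuousAt
  have Vcont : Continuous V := hV.continuous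
  have Bcont : Continuous B := hB.continuous
  have Vd : ∀ t, HasDerivAt (fun s => V (ξ s)) ((fderiv ℝ V (ξ t)) (f (ξ t))) t := fun t =>
    ((hV.differentiable one_ne_zero (ξ t)).hasFDerivAt).comp_hasDerivAt t (hξ t)
  have Bd : ∀ t, HasDerivAt (fun s => B (ξ s)) ((fderiv ℝ B (ξ t)) (f (ξ t))) t := fun t =>
    ((hB.differentiable one_ne_zero (ξ t)).hasFDerivAt).comp_hasDerivAt t (hξ t)
  have hXSc : IsClosed XS := hXS.isClosed
  have hXFc : IsClosed XF := hXF.isClosed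
  -- a point of XS where V ≤ 0 lies in the interior of XS
  have hintS : ∀ x, x ∈ XS → V x ≤ 0 → x ∈ interior XS := by
    intro x hx hVx
    have hcl : x ∈ closure XS := subset_closure hx
    rw [closure_eq_interior_union_frontier] at hcl
    rcases hcl with h | h
    · exact h
    · exact absurd hVx (not_le.mpr (hVbd x h))
  have hintF : ∀ x, x ∈ XF → B x ≤ 0 → x ∈ interior XF := by
    intro x hx hBx
    have hcl : x ∈ closure XF := subset_closure hx
    rw [closure_eq_interior_union_frontier] at hcl
    rcases hcl with h | h
    · exact h
    · exact absurd hBx (not_le.mpr (hBF x h))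
  have hξ0S : ξ t₀ ∈ XS := interior_subset (hXIint hξ0)
  -- Core invariance lemma
  have L : ∀ b, t₀ ≤ b → (∀ s, t₀ ≤ s → s < b → ξ s ∉ XG) →
      ∀ s ∈ Set.Icc t₀ b, ξ s ∈ XS ∧ V (ξ s) ≤ 0 := by
    intro b hb hnotG
    set A := {t ∈ Set.Icc t₀ b | ∀ s ∈ Set.Icc t₀ t, ξ s ∈ XS ∧ V (ξ s) ≤ 0} with hA
    have hA0 : t₀ ∈ A := by
      refine ⟨⟨le_rfl, hb⟩, fun s hs => ?_⟩
      have : s = t₀ := le_antisymm hs.2 hs.1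
      subst this
      exact ⟨hξ0S, hVI _ hξ0⟩
    have hAne : A.Nonempty := ⟨t₀, hA0⟩
    have hAbdd : BddAbove A := ⟨b, fun t ht => ht.1.2⟩
    set c := sSup A with hc
    have hcIcc : c ∈ Set.Icc t₀ b := ⟨le_csSup hAbdd hA0, csSup_le hAne fun t ht => ht.1.2⟩
    have hPc : ξ c ∈ XS ∧ V (ξ c) ≤ 0 := by
      have hAP : A ⊆ ξ ⁻¹' XS ∩ {t | V (ξ t) ≤ 0} := fun t ht =>
        ht.2 t ⟨ht.1.1, le_rfl⟩
      have hPcl : IsClosed (ξ ⁻¹' XS ∩ {t | V (ξ t) ≤ 0}) :=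
        (hXSc.preimage ξcont).inter (isClosed_le (Vcont.comp ξcont) continuous_const)
      have : c ∈ closure A := csSup_mem_closure hAne hAbdd
      exact (hPcl.closure_subset_iff.mpr hAP) this
    have hcA : c ∈ A := by
      refine ⟨hcIcc, fun s hs => ?_⟩
      rcases eq_or_lt_of_le hs.2 with h | h
      · subst h; exact hPc
      · obtain ⟨a, haA, hsa⟩ := exists_lt_of_lt_csSup hAne h
        exact haA.2 s ⟨hs.1, hsa.le⟩
    have hcb : c = b := by
      by_contra hne
      have hlt : c < b := lt_of_le_of_ne hcIcc.2 hne
      have hnG : ξ c ∉ XG := hnotG c hcIcc.1 hlt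
      have hder : (fderiv ℝ V (ξ c)) (f (ξ c)) ≤ -γ :=
        hVdot (ξ c) ⟨⟨hPc.1, hPc.2⟩, hnG⟩
      have ev1 : ∀ᶠ u in 𝓝[>] c, V (ξ u) < V (ξ c) :=
        ev_lt_of_hasDerivAt_neg (Vd c) (lt_of_le_of_lt hder (by linarith))
      have ev2 : ∀ᶠ u in 𝓝[>] c, ξ u ∈ XS := by
        have hmem : ξ ⁻¹' interior XS ∈ 𝓝 c :=
          (isOpen_interior.preimage ξcont).mem_nhds (hintS _ hPc.1 hPc.2)
        exact Filter.mem_of_superset (nhdsWithin_le_nhds hmem) fun u hu => (interior_subset (hu : ξ u ∈ interior XS) : ξ u ∈ XS)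
      have ev3 : ∀ᶠ u in 𝓝[>] c, u ≤ b :=
        Filter.mem_of_superset (Ioc_mem_nhdsGT_of_mem ⟨le_rfl, hlt⟩) fun u hu => hu.2
      have hall := (ev1.and (ev2.and ev3))
      rw [eventually_iff, mem_nhdsGT_iff_exists_Ioc_subset] at hall
      obtain ⟨u, hu, hsub⟩ := hall
      have huIoc : u ∈ Set.Ioc c u := ⟨hu, le_rfl⟩
      have huA : u ∈ A := by
        refine ⟨⟨hcIcc.1.trans (le_of_lt hu), (hsub huIoc).2.2⟩, fun s hs => ?_⟩
        rcases le_or_gt s c with h | h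
        · exact hcA.2 s ⟨hs.1, h⟩
        · have := hsub ⟨h, hs.2⟩
          exact ⟨this.2.1, (this.1.trans_le hPc.2).le⟩
      exact absurd (le_csSup hAbdd huA) (not_le.mpr hu)
    intro s hs
    rw [← hcb] at hs
    exact hcA.2 s hs
  -- lower bound of V on XS
  obtain ⟨z, hzS, hzmin'⟩ := hXS.exists_isMinOn ⟨ξ t₀, hξ0S⟩ Vcont.continuousOn
  have hzmin : ∀ y ∈ XS, V z ≤ V y := fun y hy => hzmin' hy
  set m := V z with hm
  -- the trajectory reaches XG
  have key : ∃ t, t₀ ≤ t ∧ ξ t ∈ XG := by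
    by_contra hno
    push_neg at hno
    set T₁ := t₀ + (V (ξ t₀) - m + 1) / γ with hT₁def
    have hnum : (0:ℝ) < V (ξ t₀) - m + 1 := by
      have := hzmin (ξ t₀) hξ0S; linarith
    have hT₁ : t₀ < T₁ := by
      have : 0 < (V (ξ t₀) - m + 1) / γ := div_pos hnum hγ
      rw [hT₁def]; linarith
    have hall := L T₁ hT₁.le (fun s hs _ => hno s hs)
    set g : ℝ → ℝ := fun t => V (ξ t) + γ * t with hg
    have gder : ∀ t, HasDerivAt g ((fderiv ℝ V (ξ t)) (f (ξ t)) + γ) t := by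
      intro t
      have h2 : HasDerivAt (fun s : ℝ => γ * s) γ t := by
        simpa using (hasDerivAt_id t).const_mul γ
      exact (Vd t).add h2
    have anti : AntitoneOn g (Set.Icc t₀ T₁) := by
      apply antitoneOn_of_deriv_nonpos (convex_Icc _ _)
      · exact ((Vcont.comp ξcont).add (continuous_const.mul continuous_id)).continuousOn
      · intro x hx; exact ((gder x).differentiableAt).differentiableWithinAt
      · intro x hx
        rw [(gder x).deriv]
        rw [interior_Icc] at hx
        have hxI : x ∈ Set.Icc t₀ T₁ := Set.Ioo_subset_Icc_self hx
        obtain ⟨hxs, hvle⟩ := hall x hxI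
        have := hVdot (ξ x) ⟨⟨hxs, hvle⟩, hno x hxI.1⟩
        linarith
    have hgle : g T₁ ≤ g t₀ :=
      anti (Set.left_mem_Icc.mpr hT₁.le) (Set.right_mem_Icc.mpr hT₁.le) hT₁.le
    have hmT₁ : m ≤ V (ξ T₁) := hzmin (ξ T₁) (hall T₁ (Set.right_mem_Icc.mpr hT₁.le)).1
    have heq : γ * (T₁ - t₀) = V (ξ t₀) - m + 1 := by
      rw [hT₁def]; field_simp; ring
    simp only [hg] at hgle
    nlinarith
  obtain ⟨t₁, ht₁0, ht₁G⟩ := key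
  set H := Set.Ici t₀ ∩ ξ ⁻¹' XG with hH
  have Hcl : IsClosed H := isClosed_Ici.inter (hXG.isClosed.preimage ξcont)
  have Hne : H.Nonempty := ⟨t₁, ht₁0, ht₁G⟩
  have Hbdd : BddBelow H := ⟨t₀, fun t ht => ht.1⟩
  set T := sInf H with hT
  have hTH : T ∈ H := Hcl.csInf_mem Hne Hbdd
  have ht₀T : t₀ ≤ T := hTH.1
  have hTG : ξ T ∈ XG := hTH.2
  have hnotGbefore : ∀ s, t₀ ≤ s → s < T → ξ s ∉ XG := fun s hs hsT hmem =>
    absurd (csInf_le Hbdd ⟨hs, hmem⟩) (not_le.mpr hsT)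
  have hstay := L T ht₀T hnotGbefore
  -- B stays nonpositive after T
  have Bneg : ∀ t, T ≤ t → B (ξ t) ≤ 0 := by
    intro t hTt
    by_contra hpos
    push_neg at hpos
    set S₂ := Set.Icc T t ∩ {u | B (ξ u) ≤ 0} with hS₂
    have S₂cl : IsClosed S₂ :=
      isClosed_Icc.inter (isClosed_le (Bcont.comp ξcont) continuous_const)
    have S₂ne : S₂.Nonempty := ⟨T, ⟨le_rfl, hTt⟩, hBG _ hTG⟩
    have S₂bdd : BddAbove S₂ := ⟨t, fun u hu => hu.1.2⟩
    set s := sSup S₂ with hs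
    have hsS₂ : s ∈ S₂ := S₂cl.csSup_mem S₂ne S₂bdd
    have hslt : s < t := by
      rcases eq_or_lt_of_le hsS₂.1.2 with h | h
      · rw [h] at hsS₂; exact absurd hsS₂.2 (not_le.mpr hpos)
      · exact h
    have hpos' : ∀ u ∈ Set.Ioc s t, 0 < B (ξ u) := by
      intro u hu
      by_contra hle
      push_neg at hle
      have : u ∈ S₂ := ⟨⟨hsS₂.1.1.trans hu.1.le, hu.2⟩, hle⟩
      exact absurd (le_csSup S₂bdd this) (not_le.mpr hu.1)
    have hBs0 : B (ξ s) = 0 := by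
      refine le_antisymm hsS₂.2 ?_
      have tend : Filter.Tendsto (fun u => B (ξ u)) (𝓝[>] s) (𝓝 (B (ξ s))) :=
        ((Bcont.comp ξcont).tendsto s).mono_left nhdsWithin_le_nhds
      have ev : ∀ᶠ u in 𝓝[>] s, 0 ≤ B (ξ u) :=
        Filter.mem_of_superset (Ioc_mem_nhdsGT_of_mem ⟨le_rfl, hslt⟩)
          fun u hu => (hpos' u hu).le
      exact ge_of_tendsto tend ev
    have ev1 : ∀ᶠ u in 𝓝[>] s, B (ξ u) < B (ξ s) :=
      ev_lt_of_hasDerivAt_neg (Bd s) (hBdot (ξ s) hBs0)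
    have ev2 : ∀ᶠ u in 𝓝[>] s, u ∈ Set.Ioc s t := Ioc_mem_nhdsGT_of_mem ⟨le_rfl, hslt⟩
    obtain ⟨u, hu1, hu2⟩ := (ev1.and ev2).exists
    rw [hBs0] at hu1
    exact absurd (hpos' u hu2) (not_lt.mpr hu1.le)
  refine ⟨T, ht₀T, fun t ht hcon => hcon.2 (hstay t ht).1, hTG, ?_⟩
  -- remain in XF
  intro t hTt
  by_contra hnF
  set S₃ := Set.Icc T t ∩ ξ ⁻¹' XF with hS₃
  have S₃cl : IsClosed S₃ := isClosed_Icc.inter (hXFc.preimage ξcont)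
  have S₃ne : S₃.Nonempty := ⟨T, ⟨le_rfl, hTt⟩, (interior_subset (hXGint hTG) : ξ T ∈ XF)⟩
  have S₃bdd : BddAbove S₃ := ⟨t, fun u hu => hu.1.2⟩
  set s := sSup S₃ with hs
  have hsS₃ : s ∈ S₃ := S₃cl.csSup_mem S₃ne S₃bdd
  have hslt : s < t := by
    rcases eq_or_lt_of_le hsS₃.1.2 with h | h
    · rw [h] at hsS₃; exact absurd hsS₃.2 hnF
    · exact h
  have hsint : ξ s ∈ interior XF := hintF _ hsS₃.2 (Bneg s hsS₃.1.1)
  have ev1 : ∀ᶠ u in 𝓝[>] s, ξ u ∈ XF := by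
    have hmem : ξ ⁻¹' interior XF ∈ 𝓝 s :=
      (isOpen_interior.preimage ξcont).mem_nhds hsint
    exact Filter.mem_of_superset (nhdsWithin_le_nhds hmem) fun u hu => (interior_subset (hu : ξ u ∈ interior XF) : ξ u ∈ XF)
  have ev2 : ∀ᶠ u in 𝓝[>] s, u ∈ Set.Ioc s t := Ioc_mem_nhdsGT_of_mem ⟨le_rfl, hslt⟩
  obtain ⟨u, hu1, hu2⟩ := (ev1.and ev2).exists
  have : u ∈ S₃ := ⟨⟨hsS₃.1.1.trans hu2.1.le, hu2.2⟩, hu1⟩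
  exact absurd (le_csSup S₃bdd this) (not_le.mpr hu2.1)
end

section
/- If ξ : [t₀, ∞) → ℝⁿ is continuous, B : ℝⁿ → ℝ is C¹ with B(ξ(t₀)) ≤ 0, and whenever B(ξ(t)) = 0 the time derivative d/dt B(ξ(t)) is strictly negative, then B(ξ(t)) ≤ 0 for all t ≥ t₀. -/
/-- Scalar barrier lemma: if `B ∘ ξ` starts nonpositive and has strictly
negative derivative at every time where it vanishes, then it stays
nonpositive forever. -/
theorem scalar_barrier_lemma {n : ℕ}
    (B : EuclideanSpace ℝ (Fin n) → ℝ)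
    (hB : ContDiff ℝ 1 B)
    (ξ : ℝ → EuclideanSpace ℝ (Fin n)) (t₀ : ℝ)
    (hξ : Continuous ξ)
    (hstart : B (ξ t₀) ≤ 0)
    (hdot : ∀ t, t₀ ≤ t → B (ξ t) = 0 →
      ∃ d : ℝ, d < 0 ∧ HasDerivAt (fun s => B (ξ s)) d t) :
    ∀ t, t₀ ≤ t → B (ξ t) ≤ 0 := by
  set g : ℝ → ℝ := fun s => B (ξ s) with hg
  have hgc : Continuous g := (hB.continuous).comp hξ
  intro t ht
  by_contra hpos
  push_neg at hpos
  -- set of times in [t₀, t] where g ≤ 0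
  set S : Set ℝ := {s | s ∈ Set.Icc t₀ t ∧ g s ≤ 0} with hS
  have hSne : S.Nonempty := ⟨t₀, ⟨le_refl _, ht⟩, hstart⟩
  have hSbd : BddAbove S := ⟨t, fun s hs => hs.1.2⟩
  set τ := sSup S with hτ
  have hSclosed : IsClosed S := by
    have : S = Set.Icc t₀ t ∩ g ⁻¹' (Set.Iic 0) := rfl
    rw [this]
    exact isClosed_Icc.inter (isClosed_Iic.preimage hgc)
  have hτS : τ ∈ S := hSclosed.csSup_mem hSne hSbd
  have hτ₀ : t₀ ≤ τ := hτS.1.1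
  have hτt : τ ≤ t := hτS.1.2
  have hτlt : τ < t := by
    rcases lt_or_eq_of_le hτt with h | h
    · exact h
    · rw [h] at hτS; exact absurd hτS.2 (not_le.2 hpos)
  -- g > 0 on (τ, t]
  have hgpos : ∀ s, τ < s → s ≤ t → 0 < g s := by
    intro s hs1 hs2
    by_contra h
    push_neg at h
    have : s ∈ S := ⟨⟨le_trans hτ₀ hs1.le, hs2⟩, h⟩
    exact absurd (le_csSup hSbd this) (not_le.2 hs1)
  -- g τ = 0
  have hgτ : g τ = 0 := by
    refine le_antisymm hτS.2 ?_
    have hlim : Filter.Tendsto g (nhdsWithin τ (Set.Ioi τ)) (nhds (g τ)) :=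
      (hgc.continuousAt).continuousWithinAt.tendsto
    refine ge_of_tendsto hlim ?_
    filter_upwards [Ioo_mem_nhdsGT_of_mem (Set.left_mem_Ico.2 hτlt)] with s hs
    exact (hgpos s hs.1 hs.2.le).le
  obtain ⟨d, hd, hder⟩ := hdot τ hτ₀ hgτ
  -- slope tends to d < 0, so g < 0 just right of τ: contradiction
  have hslope := hasDerivAt_iff_tendsto_slope.1 hder
  have hneg : ∀ᶠ s in nhdsWithin τ {τ}ᶜ, slope g τ s < 0 :=
    hslope.eventually (eventually_lt_nhds hd)
  have hneg' : ∀ᶠ s in nhdsWithin τ (Set.Ioi τ), slope g τ s < 0 :=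
    hneg.filter_mono (nhdsWithin_mono τ (fun s hs => ne_of_gt hs))
  have hmem : ∀ᶠ s in nhdsWithin τ (Set.Ioi τ), s ∈ Set.Ioo τ t :=
    Ioo_mem_nhdsGT_of_mem (Set.left_mem_Ico.2 hτlt)
  obtain ⟨s, hs1, hs2⟩ := (hneg'.and hmem).exists
  have hpos' : 0 < g s := hgpos s hs2.1 hs2.2.le
  have : slope g τ s = g s / (s - τ) := by
    simp [slope, hgτ, vsub_eq_sub, div_eq_inv_mul]
  rw [this] at hs1
  exact absurd hs1 (not_lt.2 (div_nonneg hpos'.le (sub_nonneg.2 hs2.1.le)))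
end
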